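/- (Theorem 2.3) Assume G is conserved by X. Let E_p := {x ∈ E : X(x) − v₀(x) = 0} be the set of equilibria of the geometrically dissipated system and E_un := {x ∈ E : X(x) = 0} the set of equilibria of the unperturbed system. Then E_p = E_un ∩ Inv. -/
import Mathlib


open scoped RealInnerProductSpace BigOperators
open Filter Topology

/-- `Σ^{(a₁,…,a_r)}_{(b₁,…,b_s)}`: the `r × s` real matrix whose `(i,j)` entry is `⟪b j, a i⟫`. -/
noncomputable def sigmaMat {E : Type*} [NormedAddCommGroup E] [InnerProductSpace ℝ E]
    {r s : ℕ} (a : Fin r → E) (b : Fin s → E) : Matrix (Fin r) (Fin s) ℝ :=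
  Matrix.of fun i j => ⟪b j, a i⟫

/-- The standard control vector `v₀(w₁,…,w_{k+1},u)`: there are `k+1` vectors `w`
(`k+1 ≥ 1` encodes the requirement that the number of `w`-vectors is at least one).
With `0`-indexing, the sign `(-1)^(i+k+1)` below is the paper's `(-1)^{i+k+1}` for
`1`-indexed `i` and `k+1` vectors. -/
noncomputable def stdControl {E : Type*} [NormedAddCommGroup E] [InnerProductSpace ℝ E]
    {k : ℕ} (w : Fin (k + 1) → E) (u : E) : E :=
  (∑ i : Fin (k + 1),
      ((-1 : ℝ) ^ ((i : ℕ) + k + 1) *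
        (sigmaMat w (Fin.snoc (w ∘ i.succAbove) u)).det) • w i) +
    (sigmaMat w w).det • u

lemma snoc_comp_succAbove {k : ℕ} {α : Type*} (w : Fin (k+1) → α) (u : α) (i : Fin (k+1)) :
    (Fin.snoc w u : Fin (k+2) → α) ∘ (Fin.castSucc i).succAbove
      = Fin.snoc (w ∘ i.succAbove) u := by
  funext b
  induction b using Fin.lastCases with
  | last =>
      simp [Fin.succAbove_castSucc_of_le _ _ (Fin.le_last i), Fin.succ_last]
  | cast a =>
      simp [Fin.castSucc_succAbove_castSucc]

lemma inner_stdControl {E : Type*} [NormedAddCommGroup E] [InnerProductSpace ℝ E]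
    {k : ℕ} (w : Fin (k + 1) → E) (u z : E) :
    ⟪z, stdControl w u⟫ = (sigmaMat (Fin.snoc w z) (Fin.snoc w u)).det := by
  rw [Matrix.det_succ_row _ (Fin.last (k+1))]
  rw [Fin.sum_univ_castSucc]
  unfold stdControl
  rw [inner_add_right, inner_sum]
  simp only [real_inner_smul_right]
  congr 1
  · refine Finset.sum_congr rfl fun i _ => ?_
    have hcol : ((sigmaMat (Fin.snoc w z) (Fin.snoc w u)).submatrix
        (Fin.last (k+1)).succAbove (Fin.castSucc i).succAbove)
        = sigmaMat w (Fin.snoc (w ∘ i.succAbove) u) := by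
      ext a b
      simp [sigmaMat, Matrix.submatrix, Fin.succAbove_last,
        ← snoc_comp_succAbove w u i, Function.comp]
    rw [hcol]
    simp [sigmaMat, Fin.snoc_castSucc, Fin.snoc_last, real_inner_comm]
    ring
  · have hcol : ((sigmaMat (Fin.snoc w z) (Fin.snoc w u)).submatrix
        (Fin.last (k+1)).succAbove (Fin.last (k+1)).succAbove)
        = sigmaMat w w := by
      ext a b
      simp [sigmaMat, Matrix.submatrix, Fin.succAbove_last]
    rw [hcol]
    simp [sigmaMat, Fin.snoc_last, real_inner_comm]
    ring

lemma inner_w_stdControl {E : Type*} [NormedAddCommGroup E] [InnerProductSpace ℝ E]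
    {k : ℕ} (w : Fin (k + 1) → E) (u : E) (j : Fin (k+1)) :
    ⟪w j, stdControl w u⟫ = 0 := by
  rw [inner_stdControl]
  apply Matrix.det_zero_of_row_eq (i := Fin.castSucc j) (j := Fin.last (k+1))
  · exact Fin.ne_of_lt (Fin.castSucc_lt_last j)
  · funext b; simp [sigmaMat]

lemma inner_u_stdControl {E : Type*} [NormedAddCommGroup E] [InnerProductSpace ℝ E]
    {k : ℕ} (w : Fin (k + 1) → E) (u : E) :
    ⟪u, stdControl w u⟫ = (sigmaMat (Fin.snoc w u) (Fin.snoc w u)).det :=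
  inner_stdControl w u u

lemma normsq_stdControl {E : Type*} [NormedAddCommGroup E] [InnerProductSpace ℝ E]
    {k : ℕ} (w : Fin (k + 1) → E) (u : E) :
    ⟪stdControl w u, stdControl w u⟫
      = (sigmaMat w w).det * (sigmaMat (Fin.snoc w u) (Fin.snoc w u)).det := by
  have hrfl : ⟪stdControl w u, stdControl w u⟫ = ⟪(∑ i : Fin (k + 1),
      ((-1 : ℝ) ^ ((i : ℕ) + k + 1) *
        (sigmaMat w (Fin.snoc (w ∘ i.succAbove) u)).det) • w i) +
      (sigmaMat w w).det • u, stdControl w u⟫ := rfl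
  rw [hrfl]
  rw [inner_add_left, sum_inner, real_inner_smul_left]
  rw [Finset.sum_eq_zero (fun i _ => by rw [real_inner_smul_left, inner_w_stdControl, mul_zero])]
  rw [inner_u_stdControl, zero_add]

lemma stdControl_eq_zero {E : Type*} [NormedAddCommGroup E] [InnerProductSpace ℝ E]
    {k : ℕ} (w : Fin (k + 1) → E) (u : E)
    (h : (sigmaMat (Fin.snoc w u) (Fin.snoc w u)).det = 0) : stdControl w u = 0 := by
  have := normsq_stdControl w u
  rw [h, mul_zero] at this
  exact inner_self_eq_zero.mp this

/-- The family of gradients `(∇F₁(x),…,∇F_{k+1}(x),∇G(x))`. -/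
noncomputable def gradFam {E : Type*} [NormedAddCommGroup E] [InnerProductSpace ℝ E]
    [FiniteDimensional ℝ E] {k : ℕ} (F : Fin (k + 1) → E → ℝ) (G : E → ℝ) (x : E) :
    Fin (k + 1 + 1) → E :=
  Fin.snoc (fun i => gradient (F i) x) (gradient G x)

/-- The standard control vector field `x ↦ v₀(∇F₁(x),…,∇F_{k+1}(x),∇G(x))`. -/
noncomputable def v0Field {E : Type*} [NormedAddCommGroup E] [InnerProductSpace ℝ E]
    [FiniteDimensional ℝ E] {k : ℕ} (F : Fin (k + 1) → E → ℝ) (G : E → ℝ) (x : E) : E :=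
  stdControl (fun i => gradient (F i) x) (gradient G x)

/-- `det Σ^{(∇F₁(x),…,∇F_{k+1}(x),∇G(x))}_{(∇F₁(x),…,∇F_{k+1}(x),∇G(x))}`. -/
noncomputable def gramDetFG {E : Type*} [NormedAddCommGroup E] [InnerProductSpace ℝ E]
    [FiniteDimensional ℝ E] {k : ℕ} (F : Fin (k + 1) → E → ℝ) (G : E → ℝ) (x : E) : ℝ :=
  (sigmaMat (gradFam F G x) (gradFam F G x)).det

/-- The set `Inv = {x | det Σ^{(∇F(x),∇G(x))}_{(∇F(x),∇G(x))} = 0}`. -/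
def invSet {E : Type*} [NormedAddCommGroup E] [InnerProductSpace ℝ E]
    [FiniteDimensional ℝ E] {k : ℕ} (F : Fin (k + 1) → E → ℝ) (G : E → ℝ) : Set E :=
  {x | gramDetFG F G x = 0}

/-- Theorem 2.3: the equilibria of the geometrically dissipated system are
exactly the equilibria of the unperturbed system lying in `Inv`. -/
theorem perturbed_equilibria_eq_unperturbed_inter_inv
    {E : Type*} [NormedAddCommGroup E] [InnerProductSpace ℝ E]
    [FiniteDimensional ℝ E] {k : ℕ} (F : Fin (k + 1) → E → ℝ) (G : E → ℝ) (X : E → E)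
    (hF : ∀ i, ContDiff ℝ 1 (F i)) (hG : ContDiff ℝ 1 G)
    (hcons : ∀ y : E, ⟪gradient G y, X y⟫ = 0) :
    {x : E | X x - v0Field F G x = 0} = {x : E | X x = 0} ∩ invSet F G := by
  ext x
  set w : Fin (k+1) → E := fun i => gradient (F i) x with hw
  set u : E := gradient G x with hu
  have hGram : gramDetFG F G x = (sigmaMat (Fin.snoc w u) (Fin.snoc w u)).det := rfl
  have hv0 : v0Field F G x = stdControl w u := rfl
  simp only [Set.mem_setOf_eq, Set.mem_inter_iff, invSet]
  constructor
  · intro h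
    have hX : X x = stdControl w u := by rw [← hv0]; exact sub_eq_zero.mp h
    have hdet : (sigmaMat (Fin.snoc w u) (Fin.snoc w u)).det = 0 := by
      rw [← inner_u_stdControl w u, ← hX]
      exact hcons x
    refine ⟨?_, by rw [hGram]; exact hdet⟩
    rw [hX, stdControl_eq_zero w u hdet]
  · rintro ⟨h0, hd⟩
    rw [h0, hv0, stdControl_eq_zero w u (hGram ▸ hd), sub_zero]
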